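/- arXiv:math/0406536 — 7 statements merged into one kernel-verified Lean document; each statement's English description precedes it below -/
import Mathlib

section
/- Let V be a finite-dimensional real vector space equipped with a symmetric bilinear form B of signature (1, n) (exactly one positive square in a diagonalization). If x, y ∈ V satisfy B(x,x) > 0 and B(y,y) > 0, then B(x,y)^2 ≥ B(x,x) · B(y,y) (the reverse Cauchy–Schwarz inequality for Lorentzian forms). -/
/-!
In a basis adapted to the form, `B x y = x₀ y₀ - ⟨x', y'⟩` with `⟨·, ·⟩` the Euclidean product of
the spatial coordinates. Writing `P = ⟨x', x'⟩`, `Q = ⟨y', y'⟩`, `R = ⟨x', y'⟩`, the identity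
`x₀² ((x₀ y₀ - R)² - (x₀² - P)(y₀² - Q)) = (y₀ P - x₀ R)² + (x₀² - P) ‖y₀ x' - x₀ y'‖²`
makes the inequality visible as soon as `B x x = x₀² - P > 0`.
-/

open Finset

theorem LinearMap.BilinForm.apply_eq_sum_of_apply_basis_eq_ite {R ι M : Type*} [CommRing R]
    [Fintype ι] [DecidableEq ι] [AddCommGroup M] [Module R M] (B : LinearMap.BilinForm R M)
    (b : Module.Basis ι R M) (w : ι → R)
    (hb : ∀ i j, B (b i) (b j) = if i = j then w i else 0) (x y : M) :
    B x y = ∑ i, w i * b.repr x i * b.repr y i := by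
  have hM : LinearMap.BilinForm.toMatrix b B = Matrix.diagonal w := by
    ext i j
    rw [LinearMap.BilinForm.toMatrix_apply, hb, Matrix.diagonal_apply]
  rw [← Matrix.toBilin_toMatrix b B, hM, Matrix.toBilin_apply]
  simp only [Matrix.diagonal_apply, mul_ite, ite_mul, mul_zero, zero_mul, sum_ite_eq, mem_univ,
    if_true]
  exact sum_congr rfl fun i _ => by ring

theorem LinearMap.BilinForm.apply_eq_sub_sum_of_lorentzian {R ι M : Type*} [CommRing R]
    [Fintype ι] [DecidableEq ι] [AddCommGroup M] [Module R M] (B : LinearMap.BilinForm R M)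
    (b : Module.Basis ι R M) (i₀ : ι)
    (hb : ∀ i j, B (b i) (b j) = if i = j then (if i = i₀ then 1 else -1) else 0) (x y : M) :
    B x y = b.repr x i₀ * b.repr y i₀ - ∑ i ∈ univ.erase i₀, b.repr x i * b.repr y i := by
  rw [B.apply_eq_sum_of_apply_basis_eq_ite b _ hb, ← add_sum_erase _ _ (mem_univ i₀),
    if_pos rfl, sub_eq_add_neg, ← sum_neg_distrib]
  congr 1
  · ring
  · exact sum_congr rfl fun i hi => by rw [if_neg (ne_of_mem_erase hi)]; ring

theorem sq_sub_sum_sq_mul_le_sq_sub_sum_mul {ι : Type*} (s : Finset ι) (a c : ℝ) (u v : ι → ℝ)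
    (hu : ∑ i ∈ s, u i * u i < a * a) :
    (a * a - ∑ i ∈ s, u i * u i) * (c * c - ∑ i ∈ s, v i * v i) ≤
      (a * c - ∑ i ∈ s, u i * v i) ^ 2 := by
  set P := ∑ i ∈ s, u i * u i
  set Q := ∑ i ∈ s, v i * v i
  set R := ∑ i ∈ s, u i * v i
  have hK : c * c * P - 2 * a * c * R + a * a * Q = ∑ i ∈ s, (c * u i - a * v i) ^ 2 := by
    simp only [P, Q, R, mul_sum, ← sum_add_distrib, ← sum_sub_distrib]
    exact sum_congr rfl fun i _ => by ring
  have hK_nonneg : 0 ≤ c * c * P - 2 * a * c * R + a * a * Q :=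
    hK ▸ sum_nonneg fun i _ => sq_nonneg _
  have ha : 0 < a * a := (sum_nonneg fun i _ => mul_self_nonneg (u i)).trans_lt hu
  have key : a * a * ((a * c - R) ^ 2 - (a * a - P) * (c * c - Q)) =
      (c * P - a * R) ^ 2 + (a * a - P) * (c * c * P - 2 * a * c * R + a * a * Q) := by
    ring
  have h_scaled : 0 ≤ a * a * ((a * c - R) ^ 2 - (a * a - P) * (c * c - Q)) :=
    key ▸ add_nonneg (sq_nonneg _) (mul_nonneg (sub_nonneg.2 hu.le) hK_nonneg)
  exact sub_nonneg.1 ((mul_nonneg_iff_of_pos_left ha).1 h_scaled)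

theorem lorentz_reverse_cauchy_schwarz_general {V : Type*} [AddCommGroup V] [Module ℝ V]
    (n : ℕ) (B : LinearMap.BilinForm ℝ V)
    (b : Module.Basis (Fin (n + 1)) ℝ V)
    (hb : ∀ i j, B (b i) (b j) =
      if i = j then (if i = (0 : Fin (n + 1)) then 1 else -1) else 0)
    (x y : V) (hx : 0 < B x x) :
    B x x * B y y ≤ (B x y) ^ 2 := by
  simp only [B.apply_eq_sub_sum_of_lorentzian b 0 hb] at hx ⊢
  exact sq_sub_sum_sq_mul_le_sq_sub_sum_mul _ _ _ _ _ (sub_pos.1 hx)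

/-- Reverse Cauchy–Schwarz inequality for a symmetric bilinear form of
signature `(1, n)` on a finite-dimensional real vector space: if
`B x x > 0` and `B y y > 0`, then `B x y ^ 2 ≥ B x x * B y y`. -/
theorem lorentz_reverse_cauchy_schwarz {V : Type*} [AddCommGroup V] [Module ℝ V]
    (n : ℕ) (B : LinearMap.BilinForm ℝ V)
    (b : Module.Basis (Fin (n + 1)) ℝ V)
    (hb : ∀ i j, B (b i) (b j) =
      if i = j then (if i = (0 : Fin (n + 1)) then 1 else -1) else 0)
    (x y : V) (hx : 0 < B x x) (hy : 0 < B y y) :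
    B x x * B y y ≤ (B x y) ^ 2 :=
  lorentz_reverse_cauchy_schwarz_general n B b hb x y hx
end

section
/- Let V be a finite-dimensional real vector space with a symmetric bilinear form B of signature (1, n), and fix h ∈ V with B(h,h) > 0. Let C = {x ∈ V : B(x,x) ≥ 0 and B(x,h) ≥ 0} be the closed forward light cone. Then C is self-dual: {y ∈ V : B(x,y) ≥ 0 for all x ∈ C} = C. -/
/-!
In coordinates adapted to the basis, `B x y = s t - ⟪u, v⟫` for `x = (s, u)` and `y = (t, v)`
in `ℝ × ℝⁿ`. For a timelike `h = (a, k)` (i.e. `‖k‖ < |a|`), Cauchy–Schwarz shows that on causal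
vectors the sign of `B x h` is that of `s a`, so the cone is `{(s, u) : ‖u‖ ≤ |s|, 0 ≤ s a}`.
Cauchy–Schwarz again shows that this cone pairs nonnegatively with itself; conversely, testing a
dual vector `(t, v)` against `(a, 0)` and `(a ‖v‖, |a| v)` gives `0 ≤ t a` and `‖v‖ ≤ |t|`.
-/

open Function

section Cones

variable {V W : Type*}

def forwardCone (Q : W → W → ℝ) (h : W) : Set W := {x | 0 ≤ Q x x ∧ 0 ≤ Q x h}

def dualCone (Q : W → W → ℝ) (C : Set W) : Set W := {y | ∀ x ∈ C, 0 ≤ Q x y}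

theorem forwardCone_comp (φ : V → W) (Q : W → W → ℝ) (h : V) :
    forwardCone (fun x y => Q (φ x) (φ y)) h = φ ⁻¹' forwardCone Q (φ h) :=
  rfl

theorem dualCone_comp_preimage {φ : V → W} (hφ : Surjective φ) (Q : W → W → ℝ) (C : Set W) :
    dualCone (fun x y => Q (φ x) (φ y)) (φ ⁻¹' C) = φ ⁻¹' dualCone Q C := by
  ext y
  simp only [dualCone, Set.mem_ofPred_eq, Set.mem_preimage, hφ.forall]

end Cones

namespace Minkowski

open RealInnerProductSpace

variable {E : Type*} [NormedAddCommGroup E] [InnerProductSpace ℝ E]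

def form (x y : ℝ × E) : ℝ := x.1 * y.1 - ⟪x.2, y.2⟫

theorem form_self (x : ℝ × E) : form x x = x.1 ^ 2 - ‖x.2‖ ^ 2 := by
  rw [form, real_inner_self_eq_norm_sq, ← sq]

theorem form_self_nonneg_iff {x : ℝ × E} : 0 ≤ form x x ↔ ‖x.2‖ ≤ |x.1| := by
  rw [form_self, sub_nonneg, sq_le_sq, abs_norm]

theorem form_self_pos_iff {x : ℝ × E} : 0 < form x x ↔ ‖x.2‖ < |x.1| := by
  rw [form_self, sub_pos, sq_lt_sq, abs_norm]

theorem fst_ne_zero_of_form_self_pos {h : ℝ × E} (hh : 0 < form h h) : h.1 ≠ 0 :=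
  abs_pos.1 ((norm_nonneg _).trans_lt (form_self_pos_iff.1 hh))

theorem form_nonneg_iff_of_causal_of_timelike {x h : ℝ × E} (hx : ‖x.2‖ ≤ |x.1|)
    (hh : ‖h.2‖ < |h.1|) : 0 ≤ form x h ↔ 0 ≤ x.1 * h.1 := by
  have hCS := abs_real_inner_le_norm x.2 h.2
  rw [abs_le] at hCS
  have hnorm : ‖x.2‖ * ‖h.2‖ ≤ |x.1| * ‖h.2‖ := by gcongr
  rw [form]
  constructor
  · intro hxh
    by_contra! hneg
    have hstrict : |x.1| * ‖h.2‖ < |x.1| * |h.1| :=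
      mul_lt_mul_of_pos_left hh (abs_pos.2 (left_ne_zero_of_mul hneg.ne))
    rw [← abs_mul, abs_of_neg hneg] at hstrict
    linarith
  · intro hpos
    have hdom : |x.1| * ‖h.2‖ ≤ |x.1 * h.1| := by
      rw [abs_mul]; gcongr
    rw [abs_of_nonneg hpos] at hdom
    linarith

theorem mem_forwardCone_iff {h : ℝ × E} (hh : 0 < form h h) {x : ℝ × E} :
    x ∈ forwardCone form h ↔ ‖x.2‖ ≤ |x.1| ∧ 0 ≤ x.1 * h.1 := by
  rw [form_self_pos_iff] at hh
  simp only [forwardCone, Set.mem_ofPred_eq, form_self_nonneg_iff]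
  exact and_congr_right fun hx => form_nonneg_iff_of_causal_of_timelike hx hh

theorem forwardCone_subset_dualCone {h : ℝ × E} (hh : 0 < form h h) :
    forwardCone form h ⊆ dualCone form (forwardCone form h) := by
  have ha := fst_ne_zero_of_form_self_pos hh
  intro y hy x hx
  rw [mem_forwardCone_iff hh] at hx hy
  have hxy : 0 ≤ x.1 * y.1 := by
    have := mul_nonneg hx.2 hy.2
    nlinarith [sq_pos_of_ne_zero ha]
  calc 0 ≤ |x.1| * |y.1| - ‖x.2‖ * ‖y.2‖ :=
        sub_nonneg.2 (mul_le_mul hx.1 hy.1 (norm_nonneg _) (abs_nonneg _))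
    _ = x.1 * y.1 - ‖x.2‖ * ‖y.2‖ := by rw [← abs_mul, abs_of_nonneg hxy]
    _ ≤ form x y := sub_le_sub_left (real_inner_le_norm _ _) _

theorem dualCone_subset_forwardCone {h : ℝ × E} (hh : 0 < form h h) :
    dualCone form (forwardCone form h) ⊆ forwardCone form h := by
  have ha := fst_ne_zero_of_form_self_pos hh
  obtain ⟨a, k⟩ := h
  rintro ⟨t, v⟩ hy
  have hta : 0 ≤ a * t := by
    simpa [form] using hy (a, 0) ((mem_forwardCone_iff hh).2 (by simp [mul_self_nonneg]))
  have htest : (a * ‖v‖, |a| • v) ∈ forwardCone form (a, k) := by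
    rw [mem_forwardCone_iff hh]
    refine ⟨by simp [norm_smul, abs_mul], ?_⟩
    simpa [mul_right_comm] using mul_nonneg (mul_self_nonneg a) (norm_nonneg v)
  have hpair : 0 ≤ |a| * ‖v‖ * (|t| - ‖v‖) := by
    have hat : a * t = |a| * |t| := by rw [← abs_mul, abs_of_nonneg hta]
    have := hy _ htest
    simp only [form, real_inner_smul_left, real_inner_self_eq_norm_sq] at this
    calc 0 ≤ a * ‖v‖ * t - |a| * ‖v‖ ^ 2 := this
      _ = _ := by linear_combination ‖v‖ * hat
  rw [mem_forwardCone_iff hh]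
  refine ⟨?_, by simpa [mul_comm] using hta⟩
  rcases (norm_nonneg v).eq_or_lt with hv | hv
  · simp [← hv]
  · simpa using (mul_nonneg_iff_of_pos_left (mul_pos (abs_pos.2 ha) hv)).1 hpair

theorem dualCone_forwardCone {h : ℝ × E} (hh : 0 < form h h) :
    dualCone form (forwardCone form h) = forwardCone form h :=
  (dualCone_subset_forwardCone hh).antisymm (forwardCone_subset_dualCone hh)

end Minkowski

section Coordinates

variable {V : Type*} [AddCommGroup V] [Module ℝ V] {n : ℕ}

noncomputable def Module.Basis.timeSpaceCoords (b : Module.Basis (Fin (n + 1)) ℝ V) (x : V) :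
    ℝ × EuclideanSpace ℝ (Fin n) :=
  (b.repr x 0, WithLp.toLp 2 fun i => b.repr x i.succ)

theorem Module.Basis.timeSpaceCoords_surjective (b : Module.Basis (Fin (n + 1)) ℝ V) :
    Surjective b.timeSpaceCoords := by
  rintro ⟨s, u⟩
  refine ⟨b.equivFun.symm (Fin.cons s u), ?_⟩
  simp only [timeSpaceCoords, ← b.equivFun_apply, LinearEquiv.apply_symm_apply, Fin.cons_zero,
    Fin.cons_succ]

theorem LinearMap.BilinForm.apply_eq_minkowski_timeSpaceCoords {B : LinearMap.BilinForm ℝ V}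
    {b : Module.Basis (Fin (n + 1)) ℝ V}
    (hb : ∀ i j, B (b i) (b j) = if i = j then (if i = 0 then 1 else -1) else 0) (x y : V) :
    B x y = Minkowski.form (b.timeSpaceCoords x) (b.timeSpaceCoords y) := by
  rw [← B.sum_repr_mul_repr_mul b x y]
  simp [Finsupp.sum_fintype, hb, Fin.sum_univ_succ, PiLp.inner_apply, Minkowski.form,
    Module.Basis.timeSpaceCoords, mul_comm, sub_eq_add_neg]

end Coordinates

/-- The closed forward light cone of a symmetric bilinear form of signature
`(1, n)` on a finite-dimensional real vector space is self-dual. -/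
theorem lorentz_forward_cone_self_dual {V : Type*} [AddCommGroup V] [Module ℝ V]
    (n : ℕ) (B : LinearMap.BilinForm ℝ V)
    (b : Module.Basis (Fin (n + 1)) ℝ V)
    (hb : ∀ i j, B (b i) (b j) =
      if i = j then (if i = (0 : Fin (n + 1)) then 1 else -1) else 0)
    (h : V) (hh : 0 < B h h) :
    {y : V | ∀ x ∈ {x : V | 0 ≤ B x x ∧ 0 ≤ B x h}, 0 ≤ B x y}
      = {x : V | 0 ≤ B x x ∧ 0 ≤ B x h} := by
  have hB : (fun x y => B x y)
      = fun x y => Minkowski.form (b.timeSpaceCoords x) (b.timeSpaceCoords y) :=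
    funext₂ (B.apply_eq_minkowski_timeSpaceCoords hb)
  change dualCone (fun x y => B x y) (forwardCone (fun x y => B x y) h)
    = forwardCone (fun x y => B x y) h
  rw [B.apply_eq_minkowski_timeSpaceCoords hb] at hh
  rw [hB, forwardCone_comp, dualCone_comp_preimage b.timeSpaceCoords_surjective,
    Minkowski.dualCone_forwardCone hh]
end

section
/- Every symmetric matrix over the field 𝔽₂ (= ZMod 2) all of whose diagonal entries are zero has even rank. -/
open Matrix

variable {R : Type*} [Field R] {l n : Type*} [Fintype l] [Fintype n] [DecidableEq l] [DecidableEq n]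

noncomputable def submoduleProdEquiv {M N : Type*} [AddCommGroup M] [AddCommGroup N]
    [Module R M] [Module R N] (p : Submodule R M) (q : Submodule R N) :
    (p.prod q) ≃ₗ[R] p × q where
  toFun x := (⟨x.1.1, x.2.1⟩, ⟨x.1.2, x.2.2⟩)
  invFun x := ⟨(x.1.1, x.2.1), ⟨x.1.2, x.2.2⟩⟩
  map_add' _ _ := rfl
  map_smul' _ _ := rfl
  left_inv _ := rfl
  right_inv _ := rfl

lemma rank_fromBlocks_diag (A : Matrix l l R) (D : Matrix n n R) :
    (fromBlocks A 0 0 D).rank = A.rank + D.rank := by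
  classical
  set e := LinearEquiv.sumArrowLequivProdArrow l n R R with he
  have hrange : LinearMap.range (fromBlocks A 0 0 D).mulVecLin
      = Submodule.map (e.symm : ((l → R) × (n → R)) →ₗ[R] (l ⊕ n → R))
          ((LinearMap.range A.mulVecLin).prod (LinearMap.range D.mulVecLin)) := by
    ext y
    constructor
    · rintro ⟨x, rfl⟩
      refine ⟨(A *ᵥ (x ∘ Sum.inl), D *ᵥ (x ∘ Sum.inr)), ⟨⟨_, rfl⟩, ⟨_, rfl⟩⟩, ?_⟩
      funext s
      cases s with
      | inl a =>
        simp [e, Matrix.mulVecLin_apply]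
        rw [show x = Sum.elim (x ∘ Sum.inl) (x ∘ Sum.inr) from by funext t; cases t <;> rfl]
        simp [Matrix.fromBlocks_mulVec]
      | inr b =>
        simp [e, Matrix.mulVecLin_apply]
        rw [show x = Sum.elim (x ∘ Sum.inl) (x ∘ Sum.inr) from by funext t; cases t <;> rfl]
        simp [Matrix.fromBlocks_mulVec]
    · rintro ⟨⟨u, v⟩, ⟨⟨xu, rfl⟩, ⟨xv, rfl⟩⟩, rfl⟩
      refine ⟨Sum.elim xu xv, ?_⟩
      funext s
      cases s with
      | inl a => simp [e, Matrix.mulVecLin_apply, Matrix.fromBlocks_mulVec]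
      | inr b => simp [e, Matrix.mulVecLin_apply, Matrix.fromBlocks_mulVec]
  rw [Matrix.rank, hrange, LinearEquiv.finrank_map_eq]
  rw [(submoduleProdEquiv _ _).finrank_eq, Module.finrank_prod]
  rfl

lemma rank_fromBlocks_invertible₁₁ (A : Matrix l l R) (B : Matrix l n R)
    (C : Matrix n l R) (D : Matrix n n R) [Invertible A] :
    (fromBlocks A B C D).rank = A.rank + (D - C * ⅟A * B).rank := by
  rw [fromBlocks_eq_of_invertible₁₁ A B C D]
  rw [rank_mul_eq_left_of_isUnit_det _ _ (by rw [det_fromBlocks_zero₂₁]; simp)]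
  rw [rank_mul_eq_right_of_isUnit_det _ _ (by rw [det_fromBlocks_zero₁₂]; simp)]
  exact rank_fromBlocks_diag A (D - C * ⅟A * B)

/-- A symmetric matrix over `𝔽₂` with zero diagonal has even rank. -/
theorem symm_zero_diag_matrix_even_rank {n : ℕ}
    (M : Matrix (Fin n) (Fin n) (ZMod 2))
    (hsymm : M.IsSymm) (hdiag : ∀ i, M i i = 0) :
    Even M.rank := by
  induction n using Nat.strong_induction_on with
  | _ n ih =>
  by_cases hM : M = 0
  · subst hM; rw [Matrix.rank_zero]; exact Even.zero
  -- find a nonzero off-diagonal entry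
  obtain ⟨i, j, hij⟩ : ∃ i j, M i j ≠ 0 := by
    by_contra h
    push_neg at h
    exact hM (by ext i j; simp [h i j])
  have hine : i ≠ j := fun h => hij (h ▸ hdiag i)
  have hMij : M i j = 1 := by
    have : ∀ x : ZMod 2, x ≠ 0 → x = 1 := by decide
    exact this _ hij
  have hMji : M j i = 1 := by
    have := congrFun (congrFun hsymm j) i
    simpa [Matrix.transpose_apply, hMij] using this.symm
  -- n = 2 + m
  have hn2 : 2 ≤ n := by
    rcases n with _ | _ | n
    · exact absurd i.2 (by omega)
    · exact absurd (Fin.ext_iff.not.mp hine) (by omega)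
    · omega
  set m := n - 2 with hm
  have hn : n = 2 + m := by omega
  -- build the equiv sending inl 0 ↦ i, inl 1 ↦ j
  let e0 : Fin 2 ⊕ Fin m ≃ Fin n := finSumFinEquiv.trans (finCongr hn.symm)
  set a := e0 (Sum.inl 0) with ha
  set b := e0 (Sum.inl 1) with hb
  have hab : a ≠ b := by
    intro h
    have h2 := e0.injective h
    exact (by decide : (0 : Fin 2) ≠ 1) (Sum.inl.inj h2)
  let τ : Equiv.Perm (Fin n) := Equiv.swap a i
  have hb'i : τ b ≠ i := by
    intro h
    have : τ b = τ a := by rw [h]; simp [τ]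
    exact hab (τ.injective this).symm
  let σ : Equiv.Perm (Fin n) := τ.trans (Equiv.swap (τ b) j)
  let f : Fin 2 ⊕ Fin m ≃ Fin n := e0.trans σ
  have hfa : f (Sum.inl 0) = i := by
    show Equiv.swap (τ b) j (τ a) = i
    rw [show τ a = i from Equiv.swap_apply_left a i]
    exact Equiv.swap_apply_of_ne_of_ne (Ne.symm hb'i) hine
  have hfb : f (Sum.inl 1) = j := by
    show Equiv.swap (τ b) j (τ b) = j
    exact Equiv.swap_apply_left _ _
  -- the permuted matrix
  set N := M.submatrix f f with hN
  have hrankN : N.rank = M.rank := Matrix.rank_submatrix M f f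
  have hNsymm : ∀ p q, N q p = N p q := by
    intro p q
    have := congrFun (congrFun hsymm (f p)) (f q)
    simpa [Matrix.transpose_apply, hN] using this
  have hNdiag : ∀ p, N p p = 0 := fun p => hdiag (f p)
  -- blocks
  set A := N.toBlocks₁₁ with hA
  set B := N.toBlocks₁₂ with hB
  set C := N.toBlocks₂₁ with hC
  set D := N.toBlocks₂₂ with hD
  have hNblocks : N = fromBlocks A B C D := (Matrix.fromBlocks_toBlocks N).symm
  have hAval : A = !![0, 1; 1, 0] := by
    ext p q
    fin_cases p <;> fin_cases q <;>
      simp only [hA, Matrix.toBlocks₁₁, Matrix.of_apply, Matrix.cons_val', Matrix.cons_val_zero,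
        Matrix.cons_val_one, Matrix.head_cons, Matrix.head_fin_const, Matrix.empty_val',
        Matrix.cons_val_fin_one]
    · show N (Sum.inl 0) (Sum.inl 0) = 0; exact hNdiag _
    · show N (Sum.inl 0) (Sum.inl 1) = 1; show M (f (Sum.inl 0)) (f (Sum.inl 1)) = 1
      rw [hfa, hfb]; exact hMij
    · show N (Sum.inl 1) (Sum.inl 0) = 1; show M (f (Sum.inl 1)) (f (Sum.inl 0)) = 1
      rw [hfa, hfb]; exact hMji
    · show N (Sum.inl 1) (Sum.inl 1) = 0; exact hNdiag _
  have hAA : A * A = 1 := by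
    rw [hAval]
    ext p q
    fin_cases p <;> fin_cases q <;>
      simp [Matrix.mul_apply, Fin.sum_univ_two]
  haveI : Invertible A := ⟨A, hAA, hAA⟩
  have hinvA : ⅟A = A := (invOf_eq_right_inv hAA)
  have hrankA : A.rank = 2 := by
    rw [Matrix.rank_of_isUnit A (isUnit_of_invertible A)]
    simp
  -- Schur complement
  set S := D - C * ⅟A * B with hS
  have hrank : N.rank = 2 + S.rank := by
    rw [hNblocks, rank_fromBlocks_invertible₁₁ A B C D, hrankA]
  -- S is symmetric with zero diagonal
  have hCB : ∀ p q, B q p = C p q := fun p q => hNsymm (Sum.inr p) (Sum.inl q)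
  have hDsymm : ∀ p q, D q p = D p q := fun p q => hNsymm (Sum.inr p) (Sum.inr q)
  have hDdiag : ∀ p, D p p = 0 := fun p => hNdiag (Sum.inr p)
  have key : ∀ u v : Fin m,
      (∑ x : Fin 2, (∑ y : Fin 2, C u y * (!![(0:ZMod 2), 1; 1, 0]) y x) * B x v)
        = C u 0 * C v 1 + C u 1 * C v 0 := by
    intro u v
    rw [Fin.sum_univ_two, Fin.sum_univ_two, Fin.sum_univ_two, hCB, hCB]
    norm_num
    ring
  have hSsymm : S.IsSymm := by
    ext p q
    simp only [Matrix.transpose_apply, hS, hinvA, Matrix.sub_apply, Matrix.mul_apply, hAval]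
    rw [hDsymm p q, key q p, key p q]
    ring
  have hSdiag : ∀ p, S p p = 0 := by
    intro p
    simp only [hS, hinvA, Matrix.sub_apply, Matrix.mul_apply, hAval]
    rw [hDdiag p, key p p]
    rw [mul_comm (C p 1) (C p 0)]
    rw [CharTwo.add_self_eq_zero (C p 0 * C p 1)]
    ring
  have hSeven : Even S.rank := ih m (by omega) S hSsymm hSdiag
  rw [← hrankN, hrank]
  exact (even_two.add hSeven)
end

section
/- Let G be a nondegenerate symmetric n × n integer matrix with all diagonal entries even (the Gram matrix of an even lattice), and suppose the finite abelian group ℤⁿ / G·ℤⁿ is 2-elementary, isomorphic to (ℤ/2ℤ)ᵃ. Then n ≡ a (mod 2). -/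
/-!
The cokernel `ℤⁿ / Gℤⁿ` is killed by `2`, so reduction mod `2` identifies it with the cokernel of
`Ḡ = G mod 2` over `𝔽₂`, whence `rank Ḡ = n - a`. Since `G` is symmetric with even diagonal, `Ḡ`
is alternating, and an alternating form has even rank: it is nondegenerate on any complement of its
radical, and a nondegenerate alternating space splits off hyperbolic planes `span {x, y}` with
`B x y ≠ 0` until nothing is left.
-/

open Module LinearMap Submodule

namespace LinearMap.BilinForm

variable {K V : Type*} [Field K] [AddCommGroup V] [Module K V] {B : LinearMap.BilinForm K V}

theorem IsAlt.eq_zero_of_apply_smul_add_smul_eq_zero (hB : B.IsAlt) {x y : V} (hxy : B x y ≠ 0)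
    {s t : K} (hx : B (s • x + t • y) x = 0) (hy : B (s • x + t • y) y = 0) : s = 0 ∧ t = 0 := by
  simp only [map_add, map_smul, LinearMap.add_apply, LinearMap.smul_apply, smul_eq_mul,
    hB.self_eq_zero, ← LinearMap.IsAlt.neg hB x y, mul_zero, zero_add, add_zero, mul_neg,
    neg_eq_zero] at hx hy
  exact ⟨(mul_eq_zero.1 hy).resolve_right hxy, (mul_eq_zero.1 hx).resolve_right hxy⟩

theorem IsAlt.linearIndependent_pair (hB : B.IsAlt) {x y : V} (hxy : B x y ≠ 0) :
    LinearIndependent K ![x, y] :=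
  LinearIndependent.pair_iff.2 fun s t h =>
    hB.eq_zero_of_apply_smul_add_smul_eq_zero hxy (by simp [h]) (by simp [h])

theorem IsAlt.restrict_span_pair_nondegenerate (hB : B.IsAlt) {x y : V} (hxy : B x y ≠ 0) :
    (B.restrict (span K (Set.range ![x, y]))).Nondegenerate := by
  have hrefl : (B.restrict (span K (Set.range ![x, y]))).IsRefl := fun u v => hB.isRefl u v
  refine (IsRefl.nondegenerate_iff_separatingLeft hrefl).2 fun w hw => ?_
  obtain ⟨c, hc⟩ := (mem_span_range_iff_exists_fun K).1 w.2
  simp only [Fin.sum_univ_two, Matrix.cons_val_zero, Matrix.cons_val_one] at hc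
  have hmem : ∀ i, ![x, y] i ∈ span K (Set.range ![x, y]) := fun i => subset_span ⟨i, rfl⟩
  have hx := hw ⟨x, hmem 0⟩
  have hy := hw ⟨y, hmem 1⟩
  simp only [restrict_apply, domRestrict_apply, ← hc] at hx hy
  obtain ⟨h0, h1⟩ := hB.eq_zero_of_apply_smul_add_smul_eq_zero hxy hx hy
  ext
  simp [← hc, h0, h1]

theorem IsAlt.even_finrank_of_nondegenerate [FiniteDimensional K V] (hB : B.IsAlt)
    (hnd : B.Nondegenerate) : Even (finrank K V) := by
  induction h : finrank K V using Nat.strong_induction_on generalizing V with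
  | _ m ih =>
  rcases Nat.eq_zero_or_pos m with rfl | hpos
  · exact Even.zero
  have : Nontrivial V := finrank_pos_iff.1 (h ▸ hpos)
  obtain ⟨x, hx⟩ := exists_ne (0 : V)
  obtain ⟨y, hxy⟩ : ∃ y, B x y ≠ 0 := by
    by_contra! hxy
    exact hx (hnd.1 x hxy)
  set W := span K (Set.range ![x, y])
  have hW := hB.restrict_span_pair_nondegenerate hxy
  have hW2 : finrank K W = 2 := by
    simpa using finrank_span_eq_card (hB.linearIndependent_pair hxy)
  have hcompl := isCompl_orthogonal_of_restrict_nondegenerate hB.isRefl hW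
  have hWperp : (B.restrict (B.orthogonal W)).Nondegenerate := by
    rw [restrict_nondegenerate_iff_isCompl_orthogonal hB.isRefl,
      orthogonal_orthogonal hnd hB.isRefl]
    exact hcompl.symm
  have hle : 2 ≤ m := h ▸ hW2 ▸ W.finrank_le
  have hrank : finrank K (B.orthogonal W) = m - 2 := by
    rw [finrank_orthogonal hnd, h, hW2]
  obtain ⟨k, hk⟩ :=
    ih (m - 2) (by omega) (B := B.restrict (B.orthogonal W)) (fun u => hB u) hWperp hrank
  exact ⟨k + 1, by omega⟩

theorem restrict_nondegenerate_of_isCompl_ker (hB : B.IsRefl) {C : Submodule K V}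
    (hC : IsCompl C (LinearMap.ker B)) : (B.restrict C).Nondegenerate := by
  have hrefl : (B.restrict C).IsRefl := fun u v => hB u v
  refine (IsRefl.nondegenerate_iff_separatingLeft hrefl).2 fun c hc => ?_
  have hker : (c : V) ∈ LinearMap.ker B := by
    refine LinearMap.ext fun v => ?_
    obtain ⟨u, k, hu, hk, rfl⟩ := codisjoint_iff_exists_add_eq.1 hC.codisjoint v
    have hck : B c k = 0 := hB _ _ (LinearMap.congr_fun (LinearMap.mem_ker.1 hk) c)
    simpa [hck] using hc ⟨u, hu⟩
  exact Subtype.ext (hC.inf_eq_bot.le ⟨c.2, hker⟩)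

theorem IsAlt.even_finrank_of_isCompl_ker [FiniteDimensional K V] (hB : B.IsAlt)
    {C : Submodule K V} (hC : IsCompl C (LinearMap.ker B)) : Even (finrank K C) :=
  IsAlt.even_finrank_of_nondegenerate (fun u => hB u)
    (restrict_nondegenerate_of_isCompl_ker hB.isRefl hC)

end LinearMap.BilinForm

namespace Matrix

variable {ι : Type*} [Fintype ι] [DecidableEq ι]

theorem ker_toBilin'_flip {R : Type*} [CommRing R] (M : Matrix ι ι R) :
    LinearMap.ker (LinearMap.flip (toBilin' M)) = LinearMap.ker M.mulVecLin := by
  ext w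
  simp only [LinearMap.mem_ker, LinearMap.ext_iff, flip_apply, toBilin'_apply',
    mulVecLin_apply]
  simp_rw [dotProduct_comm _ (M *ᵥ w)]
  exact dotProduct_eq_zero_iff

theorem even_rank_of_isAlt_toBilin' {K : Type*} [Field K] (M : Matrix ι ι K)
    (hM : (toBilin' M).IsAlt) : Even M.rank := by
  obtain ⟨C, hC⟩ := Submodule.exists_isCompl (LinearMap.ker M.mulVecLin)
  have hCB : IsCompl C (LinearMap.ker (toBilin' M)) := by
    rwa [← hM.isRefl.ker_flip, ker_toBilin'_flip, isCompl_comm]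
  rw [rank, ← ((quotientEquivOfIsCompl _ C hC).symm.trans
    M.mulVecLin.quotKerEquivRange).finrank_eq]
  exact hM.even_finrank_of_isCompl_ker hCB

theorem isAlt_toBilin'_of_charTwo {R : Type*} [CommRing R] [CharP R 2] {M : Matrix ι ι R}
    (hM : M.IsSymm) (hdiag : ∀ i, M i i = 0) : (toBilin' M).IsAlt := by
  intro v
  rw [toBilin'_apply, ← Finset.sum_product']
  refine Finset.sum_involution (fun p _ => p.swap) (fun p _ => ?_) (fun p _ hp hswap => ?_)
    (fun p _ => Finset.mem_univ _) (fun p _ => rfl)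
  · have : v p.2 * M p.2 p.1 * v p.1 = v p.1 * M p.1 p.2 * v p.2 := by rw [hM.apply]; ring
    simp only [Prod.fst_swap, Prod.snd_swap, this, CharTwo.add_self_eq_zero]
  · obtain ⟨i, j⟩ := p
    obtain rfl : j = i := congrArg Prod.fst hswap
    simp [hdiag] at hp

end Matrix

section Reduction

variable (p : ℕ) (ι : Type*)

noncomputable def reduceModPi : (ι → ℤ) →ₗ[ℤ] ι → ZMod p :=
  (Int.castRingHom (ZMod p)).toIntAlgHom.toLinearMap.compLeft ι

variable {p ι}

@[simp]
theorem reduceModPi_apply (v : ι → ℤ) (i : ι) : reduceModPi p ι v i = v i := rfl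

theorem reduceModPi_surjective : Function.Surjective (reduceModPi p ι) :=
  (ZMod.intCast_surjective (n := p)).comp_left

theorem ker_reduceModPi_le {N : Submodule ℤ (ι → ℤ)} (hN : ∀ x, (p : ℤ) • x ∈ N) :
    LinearMap.ker (reduceModPi p ι) ≤ N := by
  intro x hx
  have hdvd : ∀ i, (p : ℤ) ∣ x i := fun i =>
    (ZMod.intCast_zmod_eq_zero_iff_dvd _ p).1 (congrFun hx i)
  choose y hy using hdvd
  convert hN y
  ext i
  simp [hy i]

end Reduction

namespace Matrix

variable {p : ℕ} {ι : Type*} [Fintype ι]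

theorem reduceModPi_mulVec (G : Matrix ι ι ℤ) (v : ι → ℤ) :
    reduceModPi p ι (G *ᵥ v) = G.map (Int.cast : ℤ → ZMod p) *ᵥ reduceModPi p ι v :=
  funext fun i => (Int.castRingHom (ZMod p)).map_mulVec G v i

theorem restrictScalars_range_map_intCast_mulVecLin (G : Matrix ι ι ℤ) :
    (LinearMap.range (G.map (Int.cast : ℤ → ZMod p)).mulVecLin).restrictScalars ℤ =
      (LinearMap.range G.mulVecLin).map (reduceModPi p ι) := by
  ext y
  simp only [Submodule.restrictScalars_mem, LinearMap.mem_range, Submodule.mem_map,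
    Matrix.mulVecLin_apply, exists_exists_eq_and, reduceModPi_surjective.exists,
    reduceModPi_mulVec]

noncomputable def cokernelEquivCokernelMapIntCast (G : Matrix ι ι ℤ)
    (hp : ∀ x, (p : ℤ) • x ∈ LinearMap.range G.mulVecLin) :
    ((ι → ℤ) ⧸ LinearMap.range G.mulVecLin) ≃ₗ[ℤ]
      (ι → ZMod p) ⧸ LinearMap.range (G.map (Int.cast : ℤ → ZMod p)).mulVecLin :=
  let f := ((LinearMap.range _).mkQ.restrictScalars ℤ).comp (reduceModPi p ι)
  have hker : LinearMap.ker f = LinearMap.range G.mulVecLin := by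
    rw [LinearMap.ker_comp, LinearMap.ker_restrictScalars, Submodule.ker_mkQ,
      restrictScalars_range_map_intCast_mulVecLin, Submodule.comap_map_eq,
      sup_eq_left.2 (ker_reduceModPi_le hp)]
  (Submodule.quotEquivOfEq _ _ hker.symm).trans
    (f.quotKerEquivOfSurjective ((Submodule.mkQ_surjective _).comp reduceModPi_surjective))

end Matrix

theorem Submodule.smul_mem_of_quotient_addEquiv_zmod {M α : Type*} [AddCommGroup M]
    {N : Submodule ℤ M} {p : ℕ} (e : (M ⧸ N) ≃+ (α → ZMod p)) (x : M) : (p : ℤ) • x ∈ N := by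
  rw [← Submodule.Quotient.mk_eq_zero, Submodule.Quotient.mk_smul]
  apply e.injective
  ext i
  simp

theorem finrank_eq_of_addEquiv_fin_zmod {V : Type*} [AddCommGroup V] {p a : ℕ} [Fact (1 < p)]
    [Module (ZMod p) V] (e : V ≃+ (Fin a → ZMod p)) : finrank (ZMod p) V = a :=
  (LinearEquiv.finrank_eq { e with map_smul' := ZMod.map_smul e }).trans (finrank_fin_fun _)

theorem even_lattice_two_elementary_rank_parity_general {n a : ℕ}
    (G : Matrix (Fin n) (Fin n) ℤ) (hsymm : G.IsSymm)
    (heven : ∀ i, Even (G i i))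
    (e : ((Fin n → ℤ) ⧸ LinearMap.range G.mulVecLin) ≃+ (Fin a → ZMod 2)) :
    n % 2 = a % 2 := by
  set Gbar := G.map (Int.cast : ℤ → ZMod 2)
  have hcoker : finrank (ZMod 2) ((Fin n → ZMod 2) ⧸ LinearMap.range Gbar.mulVecLin) = a :=
    finrank_eq_of_addEquiv_fin_zmod <| (G.cokernelEquivCokernelMapIntCast
      (Submodule.smul_mem_of_quotient_addEquiv_zmod e)).symm.toAddEquiv.trans e
  have hrank : a + Gbar.rank = n := by
    rw [← hcoker, Matrix.rank, Submodule.finrank_quotient_add_finrank, finrank_fin_fun]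
  have halt : (Matrix.toBilin' Gbar).IsAlt :=
    Matrix.isAlt_toBilin'_of_charTwo (hsymm.map _) fun i =>
      ZMod.intCast_eq_zero_iff_even.2 (heven i)
  obtain ⟨k, hk⟩ := Gbar.even_rank_of_isAlt_toBilin' halt
  omega

/-- If `G` is a nondegenerate symmetric integer matrix with even diagonal
(the Gram matrix of an even lattice) whose cokernel `ℤⁿ / G·ℤⁿ` is
2-elementary, isomorphic to `(ℤ/2ℤ)ᵃ`, then `n ≡ a (mod 2)`. -/
theorem even_lattice_two_elementary_rank_parity {n a : ℕ}
    (G : Matrix (Fin n) (Fin n) ℤ) (hsymm : G.IsSymm)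
    (hdet : G.det ≠ 0) (heven : ∀ i, Even (G i i))
    (e : ((Fin n → ℤ) ⧸ LinearMap.range G.mulVecLin) ≃+ (Fin a → ZMod 2)) :
    n % 2 = a % 2 :=
  even_lattice_two_elementary_rank_parity_general G hsymm heven e
end

section
/- Let M be a negative definite even lattice containing no vector of square −2. Suppose u, v ∈ M satisfy ⟨u,u⟩ = ⟨v,v⟩ = −4, ⟨u,x⟩ ≡ 0 (mod 2) for all x ∈ M, and (u+v)/2 ∈ M (i.e., u + v ∈ 2M). Then v = u or v = −u. -/
/-- In a negative definite even lattice with no vector of square `-2`, if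
`u, v` have square `-4`, `u` has even pairing with every lattice vector, and
`(u + v)/2` lies in the lattice, then `v = ±u`. -/
theorem minus_four_roots_rigid {M : Type*} [AddCommGroup M] [Module ℤ M]
    (B : M →ₗ[ℤ] M →ₗ[ℤ] ℤ) (hsymm : ∀ x y, B x y = B y x)
    (hneg : ∀ x : M, x ≠ 0 → B x x < 0) (heven : ∀ x, Even (B x x))
    (hno2 : ∀ x : M, B x x ≠ -2)
    (u v : M) (hu : B u u = -4) (hv : B v v = -4)
    (hue : ∀ x, (2 : ℤ) ∣ B u x) (hw : ∃ w : M, u + v = 2 • w) :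
    v = u ∨ v = -u := by
  obtain ⟨t, ht⟩ := hue v
  obtain ⟨w, hww⟩ := hw
  have hle : ∀ x : M, B x x ≤ 0 := by
    intro x
    by_cases h : x = 0
    · simp [h]
    · exact (hneg x h).le
  have hvu : B v u = 2 * t := by rw [hsymm v u, ht]
  have h1 : B (u + v) (u + v) = 4 * t - 8 := by
    simp [map_add, hu, hv, ht, hvu]; ring
  have h2 : B (u - v) (u - v) = -(4 * t) - 8 := by
    simp [map_sub, hu, hv, ht, hvu]; ring
  have h3 : B (u + v) (u + v) = 4 * B w w := by
    rw [hww, two_smul]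
    simp [map_add]; ring
  have hww4 : B w w = t - 2 := by omega
  have hte : Even t := by
    have := heven w
    rw [hww4] at this
    obtain ⟨k, hk⟩ := this
    exact ⟨k + 1, by omega⟩
  have htne : t ≠ 0 := by
    intro h
    exact hno2 w (by omega)
  have ht1 : t ≤ 2 := by have := hle (u + v); omega
  have ht2 : -2 ≤ t := by have := hle (u - v); omega
  obtain ⟨k, hk⟩ := hte
  have : t = 2 ∨ t = -2 := by omega
  rcases this with h | h
  · right
    have h0 : B (u + v) (u + v) = 0 := by omega
    have : u + v = 0 := by
      by_contra hne
      exact absurd h0 (hneg _ hne).ne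
    linear_combination (norm := abel) this
  · left
    have h0 : B (u - v) (u - v) = 0 := by omega
    have : u - v = 0 := by
      by_contra hne
      exact absurd h0 (hneg _ hne).ne
    linear_combination (norm := abel) -this
end

section
/- Let L = ℤ² be equipped with a symmetric bilinear form b such that b(x,x) is even for every x ∈ L and the Gram matrix of the standard basis has determinant −1. Then there exists a basis u, v of L with b(u,u) = b(v,v) = 0 and b(u,v) = 1; i.e., L is isomorphic to the hyperbolic plane U. -/
/-! Since the discriminant of the form is `1`, a square, the form has a nonzero isotropic vector;
dividing out the gcd of its coordinates gives a primitive isotropic `u`. Unimodularity yields `w`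
with `b u w = 1`, and evenness lets us correct it to the isotropic `v = w - (b w w / 2) • u`.
The Gram matrix of `(u, v)` is that of `U`, so comparing determinants shows that the matrix with
rows `u, v` has determinant `±1`, i.e. `(u, v)` is a basis. -/

open Matrix

theorem Int.exists_smul_eq_and_dotProduct_eq_one {z : Fin 2 → ℤ} (hz : z ≠ 0) :
    ∃ (g : ℤ) (u c : Fin 2 → ℤ), g ≠ 0 ∧ z = g • u ∧ c ⬝ᵥ u = 1 := by
  have hgcd : 0 < (z 0).gcd (z 1) := by
    rw [Int.gcd_pos_iff]
    by_contra! h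
    exact hz (funext fun i ↦ by fin_cases i <;> simp [h.1, h.2])
  obtain ⟨g, x, y, hg, hxy, hx, hy⟩ := Int.exists_gcd_one' hgcd
  obtain ⟨s, t, hst⟩ := Int.isCoprime_iff_gcd_eq_one.mpr hxy
  refine ⟨g, ![x, y], ![s, t], by positivity, ?_, ?_⟩
  · funext i
    fin_cases i <;> simp [hx, hy, mul_comm]
  · simpa [dotProduct, Fin.sum_univ_two] using hst

theorem Pi.exists_basis_eq_of_isUnit_det {R n : Type*} [CommRing R] [Fintype n] [DecidableEq n]
    (v : n → n → R) (hv : IsUnit (Matrix.of v).det) : ∃ B : Module.Basis n R (n → R), ⇑B = v := by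
  have hdet : (Pi.basisFun R n).det v = (Matrix.of v).det := by
    rw [Module.Basis.det_apply, ← det_transpose]
    congr 1
  obtain ⟨hli, hspan⟩ := ((Pi.basisFun R n).is_basis_iff_det).mpr (hdet ▸ hv)
  exact ⟨.mk hli hspan.ge, Module.Basis.coe_mk _ _⟩

namespace LinearMap

def gramMatrix {R M n : Type*} [CommSemiring R] [AddCommMonoid M] [Module R M]
    (b : M →ₗ[R] M →ₗ[R] R) (v : n → M) : Matrix n n R :=
  Matrix.of fun i j ↦ b (v i) (v j)

section

variable {R n : Type*} [CommRing R] [Fintype n] [DecidableEq n]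

theorem apply_eq_dotProduct_toMatrix₂'_mulVec (b : (n → R) →ₗ[R] (n → R) →ₗ[R] R) (x y : n → R) :
    b x y = x ⬝ᵥ toMatrix₂' R b *ᵥ y := by
  conv_lhs => rw [← Matrix.toLinearMap₂'_toMatrix' (R := R) b]
  exact Matrix.toLinearMap₂'_apply' _ _ _

theorem gramMatrix_eq_mul_toMatrix₂'_mul (b : (n → R) →ₗ[R] (n → R) →ₗ[R] R) (v : n → n → R) :
    b.gramMatrix v = Matrix.of v * toMatrix₂' R b * (Matrix.of v)ᵀ := by
  ext i j
  rw [gramMatrix, of_apply, apply_eq_dotProduct_toMatrix₂'_mulVec, dotProduct_mulVec,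
    Matrix.mul_apply']
  rfl

theorem det_gramMatrix (b : (n → R) →ₗ[R] (n → R) →ₗ[R] R) (v : n → n → R) :
    (b.gramMatrix v).det = (Matrix.of v).det ^ 2 * (toMatrix₂' R b).det := by
  rw [gramMatrix_eq_mul_toMatrix₂'_mul, det_mul, det_mul, det_transpose]
  ring

theorem exists_apply_eq_one_of_isUnit_det (b : (n → R) →ₗ[R] (n → R) →ₗ[R] R)
    (hb : IsUnit (toMatrix₂' R b).det) {u c : n → R} (hc : c ⬝ᵥ u = 1) : ∃ w, b u w = 1 := by
  refine ⟨(toMatrix₂' R b)⁻¹ *ᵥ c, ?_⟩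
  rw [apply_eq_dotProduct_toMatrix₂'_mulVec, mulVec_mulVec, mul_nonsing_inv _ hb, one_mulVec,
    dotProduct_comm, hc]

end

theorem exists_isotropic_apply_eq_one_of_even {M : Type*} [AddCommGroup M]
    (b : M →ₗ[ℤ] M →ₗ[ℤ] ℤ) (hsymm : ∀ x y, b x y = b y x) (heven : ∀ x, Even (b x x))
    {u w : M} (hu : b u u = 0) (huw : b u w = 1) : ∃ v, b v v = 0 ∧ b u v = 1 := by
  obtain ⟨t, ht⟩ := heven w
  have hwu : b w u = 1 := hsymm w u ▸ huw
  refine ⟨w - t • u, ?_, ?_⟩ <;>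
    simp only [map_sub, map_zsmul, sub_apply, smul_apply, smul_eq_mul, hu,
      huw, hwu, ht] <;>
    ring

theorem exists_isotropic_ne_zero_of_det_eq_neg_one {R : Type*} [CommRing R]
    [Nontrivial R] (b : (Fin 2 → R) →ₗ[R] (Fin 2 → R) →ₗ[R] R) (hsymm : ∀ x y, b x y = b y x)
    (hdet : (toMatrix₂' R b).det = -1) : ∃ z ≠ 0, b z z = 0 := by
  set G := toMatrix₂' R b
  have hG : G 1 0 = G 0 1 := by simp only [G, toMatrix₂'_apply, hsymm]
  by_cases hA : G 0 0 = 0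
  · exact ⟨Pi.single 0 1, Pi.single_ne_zero_iff.mpr one_ne_zero,
      (toMatrix₂'_apply b 0 0).symm.trans hA⟩
  -- as `G 0 1 ^ 2 - G 0 0 * G 1 1 = 1`, `G 0 0 * b z z` factors as
  -- `(G 0 0 * z 0 + (G 0 1 + 1) * z 1) * (G 0 0 * z 0 + (G 0 1 - 1) * z 1)`
  refine ⟨![G 0 1 + 1, -G 0 0], fun h ↦ hA (by simpa using congr_fun h 1), ?_⟩
  rw [det_fin_two, hG] at hdet
  rw [apply_eq_dotProduct_toMatrix₂'_mulVec b, ← show G = toMatrix₂' R b from rfl]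
  clear_value G
  simp only [dotProduct, mulVec, Fin.sum_univ_two, cons_val_zero, cons_val_one, cons_val_fin_one,
    mul_neg, neg_mul, hG]
  linear_combination G 0 0 * hdet

theorem exists_primitive_isotropic_of_det_eq_neg_one
    (b : (Fin 2 → ℤ) →ₗ[ℤ] (Fin 2 → ℤ) →ₗ[ℤ] ℤ) (hsymm : ∀ x y, b x y = b y x)
    (hdet : (toMatrix₂' ℤ b).det = -1) : ∃ u c : Fin 2 → ℤ, b u u = 0 ∧ c ⬝ᵥ u = 1 := by
  obtain ⟨z, hz, hzz⟩ := b.exists_isotropic_ne_zero_of_det_eq_neg_one hsymm hdet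
  obtain ⟨g, u, c, hg, rfl, hc⟩ := Int.exists_smul_eq_and_dotProduct_eq_one hz
  refine ⟨u, c, ?_, hc⟩
  simp only [map_smul, smul_apply, smul_eq_mul] at hzz
  simpa [hg] using hzz

end LinearMap

/-- An even lattice of rank 2 whose Gram matrix (in the standard basis of
`ℤ²`) has determinant `-1` is isomorphic to the hyperbolic plane `U`: it has
a basis `u, v` with `⟨u,u⟩ = ⟨v,v⟩ = 0` and `⟨u,v⟩ = 1`. -/
theorem even_rank_two_det_neg_one_is_hyperbolic_plane
    (b : (Fin 2 → ℤ) →ₗ[ℤ] (Fin 2 → ℤ) →ₗ[ℤ] ℤ)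
    (hsymm : ∀ x y, b x y = b y x) (heven : ∀ x, Even (b x x))
    (hdet : b (Pi.single 0 1) (Pi.single 0 1) * b (Pi.single 1 1) (Pi.single 1 1)
      - b (Pi.single 0 1) (Pi.single 1 1) * b (Pi.single 1 1) (Pi.single 0 1)
        = -1) :
    ∃ B : Module.Basis (Fin 2) ℤ (Fin 2 → ℤ),
      b (B 0) (B 0) = 0 ∧ b (B 1) (B 1) = 0 ∧ b (B 0) (B 1) = 1 := by
  have hG : (LinearMap.toMatrix₂' ℤ b).det = -1 := by
    simpa only [det_fin_two, LinearMap.toMatrix₂'_apply] using hdet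
  obtain ⟨u, c, hu, hc⟩ := b.exists_primitive_isotropic_of_det_eq_neg_one hsymm hG
  obtain ⟨w, huw⟩ := b.exists_apply_eq_one_of_isUnit_det (hG ▸ isUnit_one.neg) hc
  obtain ⟨v, hv, huv⟩ := b.exists_isotropic_apply_eq_one_of_even hsymm heven hu huw
  have hgram : b.gramMatrix ![u, v] = !![0, 1; 1, 0] := by
    ext i j
    fin_cases i <;> fin_cases j <;> simp [LinearMap.gramMatrix, hu, hv, huv, hsymm v u]
  have hunit : IsUnit (Matrix.of ![u, v]).det := by
    have h := b.det_gramMatrix ![u, v]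
    rw [hgram, hG, det_fin_two_of] at h
    exact .of_mul_eq_one _ (by linear_combination h)
  obtain ⟨B, hB⟩ := Pi.exists_basis_eq_of_isUnit_det _ hunit
  exact ⟨B, by simpa [hB] using ⟨hu, hv, huv⟩⟩
end

section
/- Let L = ℤ² with a symmetric bilinear form b such that b(x,x) ∈ 2ℤ for all x, the form is indefinite of signature (1,1), and its Gram matrix has determinant −4. Then L is isometric either to U(2) (Gram matrix [[0,2],[2,0]]) or to ⟨2⟩ ⊕ ⟨−2⟩ (Gram matrix diag(2,−2)), and these two lattices are not isometric to each other. -/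
/-!
The Gram determinant `-4 = -2²` is minus a square, so the form has a primitive isotropic vector
`v`. Extending `v` to a basis `(v, w)` gives a Gram matrix `[[0, ±2], [±2, γ]]` with `γ` even,
and replacing `w` by `±w - t v` changes `γ` by multiples of `4`; hence we may take `γ ∈ {0, 2}`.
For `γ = 0` this is `U(2)`; for `γ = 2` the basis `(w, w - v)` has Gram matrix `diag(2, -2)`.
The two lattices are not isometric because `U(2)` only takes values in `4ℤ`, while
`⟨2⟩ ⊕ ⟨-2⟩` represents `2`.
-/

open Module Matrix LinearMap

section FinTwo

variable {R M : Type*} [CommRing R] [AddCommGroup M] [Module R M]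

theorem Module.Basis.exists_fin_two_of_isUnit (e : Basis (Fin 2) R M) (p q r s : R)
    (h : IsUnit (p * s - q * r)) :
    ∃ B : Basis (Fin 2) R M, B 0 = p • e 0 + q • e 1 ∧ B 1 = r • e 0 + s • e 1 := by
  set v : Fin 2 → M := ![p • e 0 + q • e 1, r • e 0 + s • e 1]
  have hv : IsUnit (e.det v) := by
    simpa [e.det_apply, det_fin_two, Basis.toMatrix_apply, v, mul_comm r q] using h
  obtain ⟨hli, hspan⟩ := e.is_basis_iff_det.mpr hv
  exact ⟨Basis.mk hli hspan.ge, by simp [v], by simp [v]⟩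

theorem Module.Basis.exists_fin_two_of_isCoprime (e : Basis (Fin 2) R M) {p q : R}
    (h : IsCoprime p q) : ∃ B : Basis (Fin 2) R M, B 0 = p • e 0 + q • e 1 := by
  obtain ⟨u, v, huv⟩ := h
  obtain ⟨B, hB, -⟩ := e.exists_fin_two_of_isUnit p q (-v) u (by
    rw [show p * u - q * -v = 1 by linear_combination huv]; exact isUnit_one)
  exact ⟨B, hB⟩

theorem LinearMap.BilinForm.apply_smul_add_smul (b : LinearMap.BilinForm R M) (x y : M)
    (p q r s : R) : b (p • x + q • y) (r • x + s • y) =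
      p * r * b x x + p * s * b x y + q * r * b y x + q * s * b y y := by
  simp only [map_add, map_smul, LinearMap.add_apply, LinearMap.smul_apply, smul_eq_mul]
  ring

theorem LinearMap.BilinForm.det_toMatrix₂_fin_two (b : LinearMap.BilinForm R M)
    (B : Basis (Fin 2) R M) :
    (toMatrix₂ B B b).det = b (B 0) (B 0) * b (B 1) (B 1) - b (B 0) (B 1) * b (B 1) (B 0) := by
  rw [det_fin_two, toMatrix₂_apply, toMatrix₂_apply, toMatrix₂_apply, toMatrix₂_apply]

end FinTwo

theorem LinearMap.BilinForm.det_toMatrix₂_int_eq {ι M : Type*} [Fintype ι] [DecidableEq ι]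
    [AddCommGroup M] [Module ℤ M] (b : LinearMap.BilinForm ℤ M) (e e' : Basis ι ℤ M) :
    (toMatrix₂ e' e' b).det = (toMatrix₂ e e b).det := by
  rw [← toMatrix₂_mul_basis_toMatrix e e e' e' b, det_mul, det_mul, det_transpose]
  have hunit : IsUnit (e.toMatrix e').det := e.det_apply e' ▸ e.isUnit_det e'
  rcases Int.isUnit_iff.mp hunit with h | h <;> rw [h] <;> ring

theorem exists_isCoprime_isotropic_of_det_eq_neg_sq {a c d k : ℤ}
    (h : a * c - d ^ 2 = -k ^ 2) :
    ∃ p q : ℤ, IsCoprime p q ∧ a * p ^ 2 + 2 * d * p * q + c * q ^ 2 = 0 := by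
  rcases eq_or_ne a 0 with rfl | ha
  · exact ⟨1, 0, isCoprime_one_left, by ring⟩
  -- the vector `(d - k, -a)` is isotropic; divide it by the gcd of its coordinates
  obtain ⟨g, p, q, hg, hpq, hp, hq⟩ :=
    Int.exists_gcd_one' (Int.gcd_pos_of_ne_zero_right (d - k) (neg_ne_zero.mpr ha))
  refine ⟨p, q, Int.isCoprime_iff_gcd_eq_one.mpr hpq, ?_⟩
  have hiso : (g : ℤ) ^ 2 * (a * p ^ 2 + 2 * d * p * q + c * q ^ 2) = 0 := by
    rw [show (g : ℤ) ^ 2 * (a * p ^ 2 + 2 * d * p * q + c * q ^ 2)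
      = a * (p * g) ^ 2 + 2 * d * (p * g) * (q * g) + c * (q * g) ^ 2 by ring, ← hp, ← hq]
    linear_combination a * h
  exact (mul_eq_zero.mp hiso).resolve_left (by positivity)

namespace LinearMap.BilinForm

variable {M : Type*} [AddCommGroup M] [Module ℤ M] {b : LinearMap.BilinForm ℤ M}

theorem exists_basis_isotropic_of_det_eq_neg_sq (hb : b.IsSymm) (e : Basis (Fin 2) ℤ M) {k : ℤ}
    (hdet : (toMatrix₂ e e b).det = -k ^ 2) : ∃ B : Basis (Fin 2) ℤ M, b (B 0) (B 0) = 0 := by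
  rw [det_toMatrix₂_fin_two, hb.eq (e 1) (e 0), ← sq] at hdet
  obtain ⟨p, q, hpq, hiso⟩ := exists_isCoprime_isotropic_of_det_eq_neg_sq hdet
  obtain ⟨B, hB⟩ := e.exists_fin_two_of_isCoprime hpq
  refine ⟨B, ?_⟩
  rw [hB, apply_smul_add_smul, hb.eq (e 1) (e 0)]
  linear_combination hiso

theorem exists_basis_isotropic_pairing_two (hb : b.IsSymm) (B : Basis (Fin 2) ℤ M)
    (h00 : b (B 0) (B 0) = 0) (h11 : Even (b (B 1) (B 1))) (hdet : (toMatrix₂ B B b).det = -4) :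
    ∃ B' : Basis (Fin 2) ℤ M, b (B' 0) (B' 0) = 0 ∧ b (B' 0) (B' 1) = 2 ∧
      (b (B' 1) (B' 1) = 0 ∨ b (B' 1) (B' 1) = 2) := by
  rw [det_toMatrix₂_fin_two, h00, hb.eq (B 1) (B 0)] at hdet
  obtain ⟨ε, hε, hβ⟩ : ∃ ε : ℤ, ε * ε = 1 ∧ b (B 0) (B 1) = 2 * ε := by
    have : (b (B 0) (B 1) - 2) * (b (B 0) (B 1) + 2) = 0 := by linear_combination -hdet
    rcases mul_eq_zero.mp this with h | h
    · exact ⟨1, by norm_num, by linarith⟩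
    · exact ⟨-1, by norm_num, by linarith⟩
  obtain ⟨m, hm⟩ := h11
  have hdiv := Int.emod_add_mul_ediv m 2
  set t := m / 2
  obtain ⟨B', hB'0, hB'1⟩ := B.exists_fin_two_of_isUnit 1 0 (-t) ε
    (by rw [show 1 * ε - 0 * -t = ε by ring]; exact IsUnit.of_mul_eq_one ε hε)
  refine ⟨B', ?_, ?_, ?_⟩ <;>
    simp only [hB'0, hB'1, apply_smul_add_smul, hb.eq (B 1) (B 0), h00, hβ, hm]
  · ring
  · linear_combination 2 * hε
  · rcases Int.emod_two_eq_zero_or_one m with hr | hr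
    · left; linear_combination (2 * m - 4 * t) * hε - 2 * hdiv + 2 * hr
    · right; linear_combination (2 * m - 4 * t) * hε - 2 * hdiv + 2 * hr

theorem exists_basis_diag_two_neg_two (hb : b.IsSymm) (B : Basis (Fin 2) ℤ M)
    (h00 : b (B 0) (B 0) = 0) (h01 : b (B 0) (B 1) = 2) (h11 : b (B 1) (B 1) = 2) :
    ∃ B' : Basis (Fin 2) ℤ M,
      b (B' 0) (B' 0) = 2 ∧ b (B' 1) (B' 1) = -2 ∧ b (B' 0) (B' 1) = 0 := by
  obtain ⟨B', hB'0, hB'1⟩ := B.exists_fin_two_of_isUnit 0 1 (-1) 1 (by norm_num)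
  refine ⟨B', ?_, ?_, ?_⟩ <;>
    simp only [hB'0, hB'1, apply_smul_add_smul, hb.eq (B 1) (B 0), h00, h01, h11] <;> ring

theorem exists_basis_of_even_of_det_eq_neg_four (hb : b.IsSymm) (heven : ∀ x, Even (b x x))
    (e : Basis (Fin 2) ℤ M) (hdet : (toMatrix₂ e e b).det = -4) :
    (∃ B : Basis (Fin 2) ℤ M,
        b (B 0) (B 0) = 0 ∧ b (B 1) (B 1) = 0 ∧ b (B 0) (B 1) = 2) ∨
      ∃ B : Basis (Fin 2) ℤ M, b (B 0) (B 0) = 2 ∧ b (B 1) (B 1) = -2 ∧ b (B 0) (B 1) = 0 := by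
  obtain ⟨B, h00⟩ :=
    exists_basis_isotropic_of_det_eq_neg_sq hb e (k := 2) (by rw [hdet]; norm_num)
  obtain ⟨B', h00', h01', h11' | h11'⟩ := exists_basis_isotropic_pairing_two hb B h00 (heven _)
    ((det_toMatrix₂_int_eq b e B).trans hdet)
  · exact Or.inl ⟨B', h00', h11', h01'⟩
  · exact Or.inr (exists_basis_diag_two_neg_two hb B' h00' h01' h11')

end LinearMap.BilinForm

theorem even_rank_two_det_neg_four_classification_general
    (b : (Fin 2 → ℤ) →ₗ[ℤ] (Fin 2 → ℤ) →ₗ[ℤ] ℤ)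
    (hsymm : ∀ x y, b x y = b y x) (heven : ∀ x, Even (b x x))
    (hdet : b (Pi.single 0 1) (Pi.single 0 1) * b (Pi.single 1 1) (Pi.single 1 1)
      - b (Pi.single 0 1) (Pi.single 1 1) * b (Pi.single 1 1) (Pi.single 0 1)
        = -4) :
    ((∃ B : Module.Basis (Fin 2) ℤ (Fin 2 → ℤ),
        b (B 0) (B 0) = 0 ∧ b (B 1) (B 1) = 0 ∧ b (B 0) (B 1) = 2) ∨
      (∃ B : Module.Basis (Fin 2) ℤ (Fin 2 → ℤ),
        b (B 0) (B 0) = 2 ∧ b (B 1) (B 1) = -2 ∧ b (B 0) (B 1) = 0)) ∧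
    ¬ ∃ e : (Fin 2 → ℤ) ≃ₗ[ℤ] (Fin 2 → ℤ), ∀ x y : Fin 2 → ℤ,
        2 * (e x 0 * e y 1 + e x 1 * e y 0)
          = 2 * (x 0 * y 0) - 2 * (x 1 * y 1) := by
  refine ⟨LinearMap.BilinForm.exists_basis_of_even_of_det_eq_neg_four ⟨hsymm⟩ heven
    (Pi.basisFun ℤ (Fin 2)) ?_, ?_⟩
  · simpa [LinearMap.BilinForm.det_toMatrix₂_fin_two] using hdet
  · rintro ⟨e, he⟩
    have h := he (Pi.single 0 1) (Pi.single 0 1)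
    simp only [Pi.single_eq_same, Pi.single_eq_of_ne one_ne_zero, mul_one, mul_zero, sub_zero] at h
    generalize e (Pi.single 0 1) 0 = u, e (Pi.single 0 1) 1 = v at h
    have h42 : (4 : ℤ) ∣ 2 := ⟨u * v, by linear_combination -h⟩
    norm_num at h42

/-- An even indefinite lattice of rank 2, signature `(1,1)` and determinant
`-4` is isometric either to `U(2)` (Gram matrix `[[0,2],[2,0]]`) or to
`⟨2⟩ ⊕ ⟨-2⟩` (Gram matrix `diag(2,-2)`); moreover these two lattices are not
isometric to each other. -/
theorem even_rank_two_det_neg_four_classification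
    (b : (Fin 2 → ℤ) →ₗ[ℤ] (Fin 2 → ℤ) →ₗ[ℤ] ℤ)
    (hsymm : ∀ x y, b x y = b y x) (heven : ∀ x, Even (b x x))
    (hindef : (∃ x, 0 < b x x) ∧ (∃ y, b y y < 0))
    (hdet : b (Pi.single 0 1) (Pi.single 0 1) * b (Pi.single 1 1) (Pi.single 1 1)
      - b (Pi.single 0 1) (Pi.single 1 1) * b (Pi.single 1 1) (Pi.single 0 1)
        = -4) :
    ((∃ B : Module.Basis (Fin 2) ℤ (Fin 2 → ℤ),
        b (B 0) (B 0) = 0 ∧ b (B 1) (B 1) = 0 ∧ b (B 0) (B 1) = 2) ∨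
      (∃ B : Module.Basis (Fin 2) ℤ (Fin 2 → ℤ),
        b (B 0) (B 0) = 2 ∧ b (B 1) (B 1) = -2 ∧ b (B 0) (B 1) = 0)) ∧
    ¬ ∃ e : (Fin 2 → ℤ) ≃ₗ[ℤ] (Fin 2 → ℤ), ∀ x y : Fin 2 → ℤ,
        2 * (e x 0 * e y 1 + e x 1 * e y 0)
          = 2 * (x 0 * y 0) - 2 * (x 1 * y 1) :=
  even_rank_two_det_neg_four_classification_general b hsymm heven hdet
end
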